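/- Let F = T[a..b] and F' = T[a'..b'] with a < a' be neighboring runs with equal period p and equal Lyndon roots, let ℓ, ℓ' be their Lyndon positions and δ = (ℓ' - ℓ) mod p. For any integer k ≥ 2 with a'-kp-δ > a and b+kp+δ < b', the fragment T[a'-kp-δ .. b+kp+δ] has smallest period exactly kp + δ. -/

import Mathlib

open List

variable {α : Type*}

/-- `frag T a b` is the fragment `T[a..b]` (inclusive, 0-based). -/
def frag (T : List α) (a b : ℕ) : List α := (T.drop a).take (b + 1 - a)

/-- `p` is a period of `S`: `0 < p ≤ |S|` and `S[i] = S[i+p]` for all valid `i`. -/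
def IsPeriodOf (p : ℕ) (S : List α) : Prop :=
  0 < p ∧ p ≤ S.length ∧ ∀ i : ℕ, i + p < S.length → S[i]? = S[i + p]?

/-- The smallest period of `S`. -/
noncomputable def minPeriod (S : List α) : ℕ := sInf {p | IsPeriodOf p S}

/-- `T[a..b]` is a run: periodic (its smallest period occurs at least twice)
and maximal on both sides. -/
def IsRun (T : List α) (a b : ℕ) : Prop :=
  a ≤ b ∧ b < T.length ∧
  2 * minPeriod (frag T a b) ≤ b + 1 - a ∧
  (a = 0 ∨ T[a - 1]? ≠ T[a - 1 + minPeriod (frag T a b)]?) ∧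
  (b = T.length - 1 ∨ T[b + 1]? ≠ T[b + 1 - minPeriod (frag T a b)]?)

/-- `W` occurs in `T` at position `s`. -/
def OccursAt (T : List α) (s : ℕ) (W : List α) : Prop :=
  s + W.length ≤ T.length ∧ (T.drop s).take W.length = W

/-- The set of distinct square substrings of `T`. -/
def Squares (T : List α) : Set (List α) :=
  {W | ∃ X : List α, X ≠ [] ∧ W = X ++ X ∧ W <:+: T}

/-- A non-empty string is primitive if it is not a proper power. -/
def Primitive (U : List α) : Prop :=
  U ≠ [] ∧ ∀ (V : List α) (k : ℕ), U = (List.replicate k V).flatten → k = 1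

/-- Cyclic rotation moving the first `c` characters to the end. -/
def rot (c : ℕ) (L : List α) : List α := L.drop c ++ L.take c

/-- `lam` is the Lyndon root of a periodic string `S`: the lexicographically
smallest rotation of `S[0..per(S))`. -/
def LyndonRootOf [LinearOrder α] (S lam : List α) : Prop :=
  (∃ c < minPeriod S, lam = rot c (S.take (minPeriod S))) ∧
  ∀ c < minPeriod S, lam ≤ rot c (S.take (minPeriod S))

/-- Squares generated by a periodic string `U`: squares contained in `U`
whose smallest period equals that of `U`. -/
def FragSquares (U : List α) : Set (List α) :=
  {W | ∃ X : List α, X ≠ [] ∧ W = X ++ X ∧ W <:+: U ∧ minPeriod W = minPeriod U}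

/-- `subper U`: the minimum of `per(X)` over squares `X²` generated by `U`. -/
noncomputable def subper (U : List α) : ℕ :=
  sInf {q | ∃ X : List α, X ≠ [] ∧ (X ++ X) <:+: U ∧
    minPeriod (X ++ X) = minPeriod U ∧ minPeriod X = q}

/-- Fragments `[a..b]` and `[a'..b']` are neighboring:
`[a-1..b+1] ∩ [a'..b'] ≠ ∅`. -/
def Neighboring (a b a' b' : ℕ) : Prop := a ≤ b' + 1 ∧ a' ≤ b + 1

/-- `T[x..y]` is a layer of the pyramid of the neighboring runs
`F = T[a..b]` and `F' = T[a'..b']` (with `a < a'`): a subperiodic run `R`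
with `subper(R) = per(F)` such that `R ∩ (F ∪ F')` is periodic with
period `per(R)`. -/
def IsLayer (T : List α) (a b a' b' x y : ℕ) : Prop :=
  IsRun T x y ∧
  4 * subper (frag T x y) ≤ minPeriod (frag T x y) ∧
  subper (frag T x y) = minPeriod (frag T a b) ∧
  2 * minPeriod (frag T x y) ≤ min y b' + 1 - max x a ∧
  IsPeriodOf (minPeriod (frag T x y)) (frag T (max x a) (min y b'))

/-- A `τ`-synchronizing set of `T` (Kempa–Kociumaka): consistency and density. -/
def SyncSet (T : List α) (τ : ℕ) (S : Set ℕ) : Prop :=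
  (∀ i ∈ S, i + 2 * τ ≤ T.length) ∧
  (∀ i j : ℕ, i + 2 * τ ≤ T.length → j + 2 * τ ≤ T.length →
    (T.drop i).take (2 * τ) = (T.drop j).take (2 * τ) → (i ∈ S ↔ j ∈ S)) ∧
  (∀ i : ℕ, i + 3 * τ - 1 ≤ T.length →
    ((∀ k ∈ S, k < i ∨ i + τ ≤ k) ↔
      3 * minPeriod ((T.drop i).take (3 * τ - 1)) ≤ τ))

/-! Both runs spell out the Lyndon root `λ` periodically, so `T[i] = λ[(i - ℓ) mod p]` on `F` and
`T[j] = λ[(j - ℓ') mod p]` on `F'`; the choice of `δ` makes the phases of `i` and `i + kp + δ`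
agree, which gives the period `q = kp + δ` of `U = T[a'-q .. b+q]`. If `U` had a smaller period,
Fine–Wilf would give a period `g` of `U` dividing `q` with `2g ≤ q`. Together with `p` on the
overlap of `U` with `F`, this forces `gcd(p, g)` to be a period of `F`, hence `p ∣ g`; but then `g`
carries the periodicity of `F` one position past its end `b < b + q`, against maximality. -/

lemma two_mul_le_of_dvd_of_lt {d n : ℕ} (hdvd : d ∣ n) (hlt : d < n) : 2 * d ≤ n := by
  by_contra hcontra
  exact hlt.ne' (Nat.eq_of_dvd_of_lt_two_mul (by omega) hdvd (by omega))

section Periods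

variable {T : List α} {x y p : ℕ}

lemma getElem?_frag (T : List α) {i : ℕ} (hi : i < y + 1 - x) :
    (frag T x y)[i]? = T[x + i]? := by
  rw [frag, List.getElem?_take_of_lt hi, List.getElem?_drop]

lemma length_frag (T : List α) (hy : y < T.length) : (frag T x y).length = y + 1 - x := by
  rw [frag, List.length_take, List.length_drop]
  omega

def PeriodOn (T : List α) (x y p : ℕ) : Prop :=
  ∀ i, x ≤ i → i + p ≤ y → T[i]? = T[i + p]?

lemma hasPeriod_frag_iff (hy : y < T.length) :
    (frag T x y).HasPeriod p ↔ PeriodOn T x y p := by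
  rw [List.hasPeriod_iff_getElem?, length_frag T hy]
  constructor
  · intro h i hxi hiy
    have := h (i - x) (by omega)
    rwa [getElem?_frag T (by omega), getElem?_frag T (by omega),
      Nat.add_sub_cancel' hxi, ← Nat.add_assoc, Nat.add_sub_cancel' hxi] at this
  · intro h i hi
    rw [getElem?_frag T (by omega), getElem?_frag T (by omega), ← Nat.add_assoc]
    exact h (x + i) (by omega) (by omega)

lemma frag_ne_nil (hxy : x ≤ y) (hy : y < T.length) : frag T x y ≠ [] :=
  List.ne_nil_of_length_pos (by rw [length_frag T hy]; omega)

lemma isPeriodOf_frag_iff (hy : y < T.length) :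
    IsPeriodOf p (frag T x y) ↔ 0 < p ∧ p ≤ y + 1 - x ∧ PeriodOn T x y p := by
  rw [← hasPeriod_frag_iff hy, List.hasPeriod_iff_getElem?, IsPeriodOf, length_frag T hy]
  refine and_congr_right fun _ => and_congr_right fun _ =>
    ⟨fun h i hi => h i (by omega), fun h i hi => h i (by omega)⟩

lemma minPeriod_le {S : List α} (h : IsPeriodOf p S) : minPeriod S ≤ p :=
  Nat.sInf_le h

lemma isPeriodOf_minPeriod {S : List α} (hS : S ≠ []) : IsPeriodOf (minPeriod S) S :=
  Nat.sInf_mem (s := {p | IsPeriodOf p S})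
    ⟨S.length, List.length_pos_iff.2 hS, le_rfl, fun _ hi => absurd hi (by omega)⟩

namespace PeriodOn

lemma mono {x' y' : ℕ} (h : PeriodOn T x y p) (hx : x ≤ x') (hy : y' ≤ y) : PeriodOn T x' y' p :=
  fun i hi hip => h i (hx.trans hi) (hip.trans hy)

lemma gcd {q : ℕ} (hy : y < T.length) (hp : PeriodOn T x y p) (hq : PeriodOn T x y q)
    (hlen : p + q - p.gcd q ≤ y + 1 - x) : PeriodOn T x y (p.gcd q) := by
  rw [← hasPeriod_frag_iff hy] at *
  exact hp.gcd hq (by rwa [length_frag T hy])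

lemma mul (h : PeriodOn T x y p) (n : ℕ) : PeriodOn T x y (n * p) := by
  induction n with
  | zero => simp [PeriodOn]
  | succ n ih =>
    intro i hxi hiy
    rw [ih i hxi (by nlinarith), h (i + n * p) (by omega) (by nlinarith)]
    congr 1
    ring

lemma getElem?_eq_of_modEq (h : PeriodOn T x y p) {i j : ℕ} (hi : x ≤ i) (hiy : i ≤ y)
    (hj : x ≤ j) (hjy : j ≤ y) (hij : i ≡ j [MOD p]) : T[i]? = T[j]? := by
  wlog hle : i ≤ j generalizing i j
  · exact (this hj hjy hi hiy hij.symm (by omega)).symm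
  obtain ⟨n, hn⟩ := (Nat.modEq_iff_dvd' hle).1 hij
  rw [show j = i + n * p by rw [mul_comm, ← hn]; omega]
  exact h.mul n i hi (by rw [mul_comm, ← hn]; omega)

lemma extend_left {a d : ℕ} (hp0 : 0 < p) (hp : PeriodOn T a y p) (hd : PeriodOn T x y d)
    (hbound : x + p + d ≤ y + 1) : PeriodOn T a y d := by
  intro i hai hiy
  induction hn : x - i using Nat.strong_induction_on generalizing i with
  | _ n ih =>
    by_cases hxi : x ≤ i
    · exact hd i hxi hiy
    rw [hp i hai (by omega), hp (i + d) (by omega) (by omega),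
      show i + d + p = i + p + d by omega]
    exact ih (x - (i + p)) (by omega) (i + p) (by omega) (by omega) rfl

lemma getElem?_eq_of_common_root {a b a' b' ℓ ℓ' i j : ℕ} (hp0 : 0 < p)
    (hF : PeriodOn T a b p) (hF' : PeriodOn T a' b' p)
    (hroot : frag T ℓ (ℓ + p - 1) = frag T ℓ' (ℓ' + p - 1))
    (hℓ : a ≤ ℓ) (hℓb : ℓ + p ≤ b + 1) (hℓ' : a' ≤ ℓ') (hℓb' : ℓ' + p ≤ b' + 1)
    (hi : a ≤ i) (hib : i ≤ b) (hj : a' ≤ j) (hjb : j ≤ b') (hij : i + ℓ' ≡ j + ℓ [MOD p]) :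
    T[i]? = T[j]? := by
  -- `t` is the phase `(i - ℓ) mod p` of `i`, computed without truncated subtraction
  set t := (i + (p - ℓ % p)) % p
  have ht : t < p := Nat.mod_lt _ hp0
  have hti : ℓ + t ≡ i [MOD p] :=
    calc ℓ + t ≡ ℓ % p + (i + (p - ℓ % p)) [MOD p] :=
          (Nat.mod_modEq ℓ p).symm.add (Nat.mod_modEq _ p)
      _ = i + p := by have := Nat.mod_lt ℓ hp0; omega
      _ ≡ i [MOD p] := Nat.add_mod_right i p
  have htj : ℓ' + t ≡ j [MOD p] := Nat.ModEq.add_right_cancel' ℓ <|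
    calc ℓ' + t + ℓ = ℓ' + (ℓ + t) := by ring
      _ ≡ ℓ' + i [MOD p] := hti.add_left ℓ'
      _ = i + ℓ' := by ring
      _ ≡ j + ℓ [MOD p] := hij
  calc T[i]? = T[ℓ + t]? := hF.getElem?_eq_of_modEq hi hib (by omega) (by omega) hti.symm
    _ = T[ℓ' + t]? := by
      rw [← getElem?_frag T (y := ℓ + p - 1) (by omega), hroot, getElem?_frag T (by omega)]
    _ = T[j]? := hF'.getElem?_eq_of_modEq (by omega) (by omega) hj hjb htj

end PeriodOn

end Periods

namespace IsRun

variable {T : List α} {a b : ℕ}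

lemma periodOn (h : IsRun T a b) :
    0 < minPeriod (frag T a b) ∧ PeriodOn T a b (minPeriod (frag T a b)) :=
  ((isPeriodOf_frag_iff h.2.1).1 (isPeriodOf_minPeriod (frag_ne_nil h.1 h.2.1))).imp_right And.right

lemma not_periodOn_past_end (h : IsRun T a b) {x g : ℕ} (hg0 : 0 < g) (hax : a ≤ x)
    (hlen : x + minPeriod (frag T a b) + g ≤ b + 1) : ¬ PeriodOn T x (b + 1) g := by
  obtain ⟨hp0, hp⟩ := h.periodOn
  obtain ⟨-, hb, -, -, hmax⟩ := h
  set p := minPeriod (frag T a b)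
  intro hg
  have hd := (hp.mono hax le_rfl).gcd hb (hg.mono le_rfl b.le_succ) (by omega)
  have hdvd : p ∣ g := by
    by_contra hndvd
    have hdp : p.gcd g < p :=
      (Nat.gcd_le_left g hp0).lt_of_ne (mt Nat.gcd_eq_left_iff_dvd.1 hndvd)
    have := minPeriod_le ((isPeriodOf_frag_iff hb).2
      ⟨Nat.gcd_pos_of_pos_left g hp0, by omega,
        hp.extend_left hp0 hd (by have := Nat.gcd_le_right (m := p) hg0; omega)⟩)
    omega
  have hgp : g ≡ p [MOD p] :=
    (Nat.modEq_zero_iff_dvd.2 hdvd).trans (Nat.modEq_zero_iff_dvd.2 dvd_rfl).symm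
  have hshift : b + 1 - g ≡ b + 1 - p [MOD p] := Nat.ModEq.add_right_cancel hgp <| by
    rw [Nat.sub_add_cancel (by omega : g ≤ b + 1), Nat.sub_add_cancel (by omega : p ≤ b + 1)]
  have hnext : T[b + 1]? = T[b + 1 - p]? := by
    rw [← hp.getElem?_eq_of_modEq (by omega) (by omega) (by omega) (by omega) hshift,
      ← Nat.sub_add_cancel (by omega : g ≤ b + 1), Nat.add_sub_cancel]
    exact (hg _ (by omega) (by omega)).symm
  rcases hmax with hlast | hne
  · rw [getElem?_eq_none (by omega), eq_comm, List.getElem?_eq_none_iff] at hnext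
    omega
  · exact hne hnext

end IsRun

theorem induced_fragment_period_general [LinearOrder α] (T : List α)
    (a b a' b' p ℓ ℓ' δ k : ℕ) (lam : List α)
    (h1 : IsRun T a b) (h2 : IsRun T a' b')
    (hnb : Neighboring a b a' b')
    (hp1 : minPeriod (frag T a b) = p) (hp2 : minPeriod (frag T a' b') = p)
    (hℓ : a ≤ ℓ ∧ ℓ < a + p ∧ frag T ℓ (ℓ + p - 1) = lam)
    (hℓ' : a' ≤ ℓ' ∧ ℓ' < a' + p ∧ frag T ℓ' (ℓ' + p - 1) = lam)
    (hδ : δ < p ∧ (ℓ + δ) % p = ℓ' % p)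
    (hk : 2 ≤ k)
    (hleft : a + (k * p + δ) < a')
    (hright : b + (k * p + δ) < b') :
    minPeriod (frag T (a' - (k * p + δ)) (b + (k * p + δ))) = k * p + δ := by
  obtain ⟨hp0, hF⟩ := h1.periodOn
  obtain ⟨-, hF'⟩ := h2.periodOn
  have hlenF := h1.2.2.1
  have hlenF' := h2.2.2.1
  rw [hp1] at hp0 hF hlenF
  rw [hp2] at hF' hlenF'
  have h2p : 2 * p ≤ k * p := Nat.mul_le_mul_right p hk
  set q := k * p + δ
  have hy : b + q < T.length := by have := h2.2.1; omega
  have ha' : a' ≤ b + 1 := hnb.2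
  have hq : PeriodOn T (a' - q) (b + q) q := fun i hi hiq =>
    hF.getElem?_eq_of_common_root hp0 hF' (hℓ.2.2.trans hℓ'.2.2.symm) hℓ.1 (by omega)
      hℓ'.1 (by omega) (by omega) (by omega) (by omega) (by omega) <|
    calc i + ℓ' ≡ i + (ℓ + δ) [MOD p] := Nat.ModEq.add_left i (Nat.ModEq.symm hδ.2)
      _ ≡ i + (ℓ + δ) + k * p [MOD p] := (Nat.add_mul_mod_self_right _ k p).symm
      _ = i + q + ℓ := by ring
  refine le_antisymm (minPeriod_le ((isPeriodOf_frag_iff hy).2 ⟨by omega, by omega, hq⟩))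
    (not_lt.1 fun hlt => ?_)
  obtain ⟨hm0, -, hm⟩ :=
    (isPeriodOf_frag_iff hy).1 (isPeriodOf_minPeriod (frag_ne_nil (x := a' - q) (by omega) hy))
  set m := minPeriod (frag T (a' - q) (b + q))
  have hg := hm.gcd hy hq (by omega)
  have hgq : 2 * m.gcd q ≤ q :=
    two_mul_le_of_dvd_of_lt (Nat.gcd_dvd_right m q) ((Nat.gcd_le_left q hm0).trans_lt hlt)
  exact h1.not_periodOn_past_end (Nat.gcd_pos_of_pos_left q hm0) (x := a' - q) (by omega)
    (by rw [hp1]; omega) (hg.mono le_rfl (by omega))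

/-- For neighboring equal-period runs with equal Lyndon roots, the fragment
`T[a'-kp-δ .. b+kp+δ]` (for `k ≥ 2`, when it lies strictly inside `(a..b')`)
has smallest period exactly `kp + δ`. -/
theorem induced_fragment_period [LinearOrder α] (T : List α)
    (a b a' b' p ℓ ℓ' δ k : ℕ) (lam : List α)
    (hab : a < a')
    (h1 : IsRun T a b) (h2 : IsRun T a' b')
    (hnb : Neighboring a b a' b')
    (hp1 : minPeriod (frag T a b) = p) (hp2 : minPeriod (frag T a' b') = p)
    (hlam1 : LyndonRootOf (frag T a b) lam)
    (hlam2 : LyndonRootOf (frag T a' b') lam)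
    (hℓ : a ≤ ℓ ∧ ℓ < a + p ∧ frag T ℓ (ℓ + p - 1) = lam)
    (hℓ' : a' ≤ ℓ' ∧ ℓ' < a' + p ∧ frag T ℓ' (ℓ' + p - 1) = lam)
    (hδ : δ < p ∧ (ℓ + δ) % p = ℓ' % p)
    (hk : 2 ≤ k)
    (hleft : a + (k * p + δ) < a')
    (hright : b + (k * p + δ) < b') :
    minPeriod (frag T (a' - (k * p + δ)) (b + (k * p + δ))) = k * p + δ :=
  induced_fragment_period_general T a b a' b' p ℓ ℓ' δ k lam h1 h2 hnb hp1 hp2 hℓ hℓ' hδ hk hleft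
    hright
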